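/- For every integer k ≥ 0 and every complex number τ, the inequality |p_k(τ)| ≤ 4·(|τ|³ + 1)^k holds. -/

import Mathlib

open Complex

/-- `p_k(τ) = (1/(2πi)) ∮_{|t| = r} exp(Σ_{n=1}^∞ (1/n − τ²/(n+2)) (−τ t)^n) t^{−k−1} dt`,
where `r = 1/(|τ|³ + 1)`. -/
noncomputable def pFun (k : ℕ) (τ : ℂ) : ℂ :=
  (2 * Real.pi * Complex.I)⁻¹ *
    ∮ t in C(0, (‖τ‖ ^ 3 + 1)⁻¹),
      Complex.exp (∑' n : ℕ,
        (1 / ((n : ℂ) + 1) - τ ^ 2 / ((n : ℂ) + 3)) * (-τ * t) ^ (n + 1)) / t ^ (k + 1)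

/-! On the circle `|t| = r` put `w = -τt` and `x = |τ|`, so `q := |w| = x / (x³ + 1) < 1`.
Bounding the coefficients by `1/(n+1) + x²/3` and summing, the exponent has modulus at most
`-log (1 - q) + (x²/3) q / (1 - q)`, so the exponential is at most
`(1 - q)⁻¹ exp y ≤ (1 - q)⁻¹ (1 - y)⁻¹` with `y = x³ / (3 (x³ - x + 1)) < 1`. That product equals
`3 (x³ + 1) / (2x³ - 3x + 3)`, which is at most `4` because `5x³ - 12x + 9 > 0` for `x ≥ 0`.
The standard estimate of a circle integral then gives `r · 4 r^{-(k+1)} = 4 (x³ + 1)^k`. -/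

lemma norm_one_div_sub_sq_div_le (τ : ℂ) (n : ℕ) :
    ‖1 / ((n : ℂ) + 1) - τ ^ 2 / ((n : ℂ) + 3)‖ ≤ 1 / ((n : ℝ) + 1) + ‖τ‖ ^ 2 / 3 := by
  have h₁ : ‖1 / ((n : ℂ) + 1)‖ = 1 / ((n : ℝ) + 1) := by
    rw [norm_div, norm_one]; congr 1; exact_mod_cast Complex.norm_natCast (n + 1)
  have h₂ : ‖τ ^ 2 / ((n : ℂ) + 3)‖ = ‖τ‖ ^ 2 / ((n : ℝ) + 3) := by
    rw [norm_div, norm_pow]; congr 1; exact_mod_cast Complex.norm_natCast (n + 3)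
  calc _ ≤ ‖1 / ((n : ℂ) + 1)‖ + ‖τ ^ 2 / ((n : ℂ) + 3)‖ := norm_sub_le _ _
    _ ≤ 1 / ((n : ℝ) + 1) + ‖τ‖ ^ 2 / 3 := by
      rw [h₁, h₂]
      gcongr
      linarith [n.cast_nonneg (α := ℝ)]

lemma norm_tsum_mul_pow_succ_le {a : ℕ → ℂ} {c : ℝ} {w : ℂ}
    (ha : ∀ n, ‖a n‖ ≤ 1 / ((n : ℝ) + 1) + c) (hw : ‖w‖ < 1) :
    ‖∑' n, a n * w ^ (n + 1)‖ ≤ -Real.log (1 - ‖w‖) + c * (‖w‖ / (1 - ‖w‖)) := by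
  set q := ‖w‖
  have hq : 0 ≤ q := norm_nonneg w
  have h_log : HasSum (fun n : ℕ => q ^ (n + 1) / (n + 1)) (-Real.log (1 - q)) :=
    Real.hasSum_pow_div_log_of_abs_lt_one (by rwa [abs_of_nonneg hq])
  have h_geom : HasSum (fun n : ℕ => c * q ^ (n + 1)) (c * (q / (1 - q))) := by
    simpa only [pow_succ', mul_assoc, div_eq_mul_inv] using
      (hasSum_geometric_of_lt_one hq hw).mul_left (c * q)
  have h_major := h_log.add h_geom
  have h_le : ∀ n, ‖a n * w ^ (n + 1)‖ ≤ q ^ (n + 1) / (n + 1) + c * q ^ (n + 1) := fun n => by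
    rw [norm_mul, norm_pow]
    calc ‖a n‖ * q ^ (n + 1) ≤ (1 / ((n : ℝ) + 1) + c) * q ^ (n + 1) := by gcongr; exact ha n
      _ = _ := by ring
  have h_summable := h_major.summable.of_nonneg_of_le (fun _ => norm_nonneg _) h_le
  calc _ ≤ ∑' n, ‖a n * w ^ (n + 1)‖ := norm_tsum_le_tsum_norm h_summable
    _ ≤ _ := h_major.tsum_eq ▸ h_summable.tsum_le_tsum h_le h_major.summable

lemma norm_exp_tsum_mul_pow_succ_le {a : ℕ → ℂ} {c : ℝ} {w : ℂ}
    (ha : ∀ n, ‖a n‖ ≤ 1 / ((n : ℝ) + 1) + c) (hw : ‖w‖ < 1) :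
    ‖exp (∑' n, a n * w ^ (n + 1))‖ ≤ (1 - ‖w‖)⁻¹ * Real.exp (c * (‖w‖ / (1 - ‖w‖))) := by
  calc _ ≤ Real.exp ‖∑' n, a n * w ^ (n + 1)‖ := norm_exp_le_exp_norm _
    _ ≤ Real.exp (-Real.log (1 - ‖w‖) + c * (‖w‖ / (1 - ‖w‖))) :=
      Real.exp_le_exp.mpr (norm_tsum_mul_pow_succ_le ha hw)
    _ = _ := by rw [Real.exp_add, Real.exp_neg, Real.exp_log (by linarith)]

lemma inv_one_sub_mul_exp_le_four {x q : ℝ} (hx : 0 ≤ x) (hq : q * (x ^ 3 + 1) = x) :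
    (1 - q)⁻¹ * Real.exp (x ^ 2 / 3 * (q / (1 - q))) ≤ 4 := by
  have hD : 0 < x ^ 3 - x + 1 := by nlinarith [sq_nonneg (x - 1), sq_nonneg x]
  have hq' : q = x / (x ^ 3 + 1) := eq_div_of_mul_eq (by positivity) hq
  have h_one_sub_q : 1 - q = (x ^ 3 - x + 1) / (x ^ 3 + 1) := by rw [hq']; field_simp; ring
  set y := x ^ 2 / 3 * (q / (1 - q)) with hy
  have hy' : y = x ^ 3 / (3 * (x ^ 3 - x + 1)) := by
    rw [hy, h_one_sub_q, hq']; field_simp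
  have hy₀ : 0 ≤ y := by rw [hy']; positivity
  have hy₁ : y < 1 := by
    rw [hy', div_lt_one (by positivity)]; nlinarith [sq_nonneg (x - 1), sq_nonneg x]
  have hE : 0 < 2 * x ^ 3 - 3 * x + 3 := by nlinarith [sq_nonneg (x - 1), sq_nonneg x]
  have h_one_sub_y : 1 - y = (2 * x ^ 3 - 3 * x + 3) / (3 * (x ^ 3 - x + 1)) := by
    rw [hy', eq_div_iff (by positivity), sub_mul, div_mul_cancel₀ _ (by positivity)]; ring
  calc (1 - q)⁻¹ * Real.exp y ≤ (1 - q)⁻¹ * (1 / (1 - y)) := by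
        gcongr
        · rw [h_one_sub_q]; positivity
        · exact Real.exp_bound_div_one_sub_of_interval hy₀ hy₁
    _ = 3 * (x ^ 3 + 1) / (2 * x ^ 3 - 3 * x + 3) := by
        rw [h_one_sub_q, h_one_sub_y, inv_div, one_div, inv_div, div_mul_div_comm,
          div_eq_div_iff (by positivity) hE.ne']
        ring
    _ ≤ 4 := by
        rw [div_le_iff₀ hE]
        nlinarith [mul_nonneg hx (sq_nonneg (x - 1)), sq_nonneg (x - 1)]

lemma norm_pFun_integrand_le (k : ℕ) {τ t : ℂ} (ht : ‖t‖ = (‖τ‖ ^ 3 + 1)⁻¹) :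
    ‖exp (∑' n : ℕ, (1 / ((n : ℂ) + 1) - τ ^ 2 / ((n : ℂ) + 3)) * (-τ * t) ^ (n + 1)) /
      t ^ (k + 1)‖ ≤ 4 * (‖τ‖ ^ 3 + 1) ^ (k + 1) := by
  have hx : 0 < ‖τ‖ ^ 3 + 1 := by positivity
  have hw : ‖-τ * t‖ * (‖τ‖ ^ 3 + 1) = ‖τ‖ := by
    rw [norm_mul, norm_neg, ht, mul_assoc, inv_mul_cancel₀ hx.ne', mul_one]
  have hw₁ : ‖-τ * t‖ < 1 := by
    rw [← mul_lt_mul_iff_left₀ hx, hw, one_mul]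
    nlinarith [norm_nonneg τ, sq_nonneg (‖τ‖ - 1)]
  have h_exp := (norm_exp_tsum_mul_pow_succ_le (norm_one_div_sub_sq_div_le τ) hw₁).trans
    (inv_one_sub_mul_exp_le_four (norm_nonneg τ) hw)
  rw [norm_div, norm_pow, ht, inv_pow, div_inv_eq_mul]
  gcongr

/-- For every `k ≥ 0` and every `τ ∈ ℂ`, `|p_k(τ)| ≤ 4·(|τ|³ + 1)^k`. -/
theorem pFun_bound (k : ℕ) (τ : ℂ) :
    ‖pFun k τ‖ ≤ 4 * (‖τ‖ ^ 3 + 1) ^ k := by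
  have hx : 0 < ‖τ‖ ^ 3 + 1 := by positivity
  have h := circleIntegral.norm_two_pi_i_inv_smul_integral_le_of_norm_le_const (c := 0)
    (inv_pos.mpr hx).le fun t ht => norm_pFun_integrand_le k (mem_sphere_zero_iff_norm.mp ht)
  calc ‖pFun k τ‖ ≤ (‖τ‖ ^ 3 + 1)⁻¹ * (4 * (‖τ‖ ^ 3 + 1) ^ (k + 1)) := h
    _ = 4 * (‖τ‖ ^ 3 + 1) ^ k := by field_simp; ring
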